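/- arXiv:1705.06050 — 2 statements merged into one kernel-verified Lean document; each statement's English description precedes it below -/
import Mathlib

section
/- Let H₁, H₂ be Hermitian operators on ℂ^N, λ₁,…,λ_N the eigenvalues of H₂ with orthonormal eigenvectors ψ₁,…,ψ_N, and assume (H₁ψ_k,ψ_j) ≠ 0 for all k ≠ j and λ_k − λ_l ≠ λ_{k'} − λ_{l'} for any distinct ordered pairs (k,l) ≠ (k',l') with k≠l, k'≠l'. Then the subspace 𝒯 = {H Hermitian : (Hψ_k,ψ_k) = 0 for all k} is contained in ℒ(H₁,H₂); in fact the real linear span of T(H₁), T²(H₁), …, where T(H) = {H₂,H}, coincides with 𝒯, which has real dimension N(N−1). -/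
open Matrix MeasureTheory Filter Topology
open scoped ENNReal

/-- The Borel measurable space structure on matrices (entrywise). -/
instance matrixMeasurableSpace {m n α : Type*} [MeasurableSpace α] :
    MeasurableSpace (Matrix m n α) := MeasurableSpace.pi

/-- `Uexp H t = e^{-itH}`, the unitary evolution generated by the Hermitian operator `H`. -/
noncomputable def Uexp {N : ℕ} (H : Matrix (Fin N) (Fin N) ℂ) (t : ℝ) :
    Matrix (Fin N) (Fin N) ℂ :=
  NormedSpace.exp ((-(Complex.I * t)) • H)

/-- The alternating product `J_n(s₁,…,s_n) = ⋯ U₂^{s₂} U₁^{s₁}`, where the `k`-th factor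
(counting from the right, `k = 1,…,n`) is `e^{-i s_k H₁}` for odd `k` and `e^{-i s_k H₂}`
for even `k`; here `s k` denotes `s_{k+1}`. -/
noncomputable def Jalt {N : ℕ} (H₁ H₂ : Matrix (Fin N) (Fin N) ℂ) :
    ℕ → (ℕ → ℝ) → Matrix (Fin N) (Fin N) ℂ
  | 0, _ => 1
  | n + 1, s => Uexp (if n % 2 = 0 then H₁ else H₂) (s n) * Jalt H₁ H₂ n s

/-- The pair `(H₁, H₂)` satisfies the `U`-controllability condition: for some `n`, the set
`𝒥_n(H₁,H₂)` of all alternating products with nonnegative times equals the whole unitary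
group `U(N)`. -/
def UControllable {N : ℕ} (H₁ H₂ : Matrix (Fin N) (Fin N) ℂ) : Prop :=
  ∃ n : ℕ, {M : Matrix (Fin N) (Fin N) ℂ | ∃ s : ℕ → ℝ, (∀ i, 0 ≤ s i) ∧ Jalt H₁ H₂ n s = M}
    = {M : Matrix (Fin N) (Fin N) ℂ | M ∈ Matrix.unitaryGroup (Fin N) ℂ}

/-- `ℒ(H₁,H₂)`: the smallest real subspace of operators containing `H₁, H₂` and closed under
the bracket `{A,B} = i[A,B]`. -/
noncomputable def LieDynAlg {N : ℕ} (H₁ H₂ : Matrix (Fin N) (Fin N) ℂ) :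
    Submodule ℝ (Matrix (Fin N) (Fin N) ℂ) :=
  sInf {p | H₁ ∈ p ∧ H₂ ∈ p ∧ ∀ A ∈ p, ∀ B ∈ p, Complex.I • (A * B - B * A) ∈ p}

/-!
In the eigenbasis of `H₂`, the map `T = {H₂, ·}` multiplies the `(k, l)` entry of a matrix by the
frequency `i(λ_k - λ_l)`, so `∑ c_m T^m H₁` has entries `Q(i(λ_k - λ_l)) (H₁)_{kl}` with
`Q = ∑ c_m X^m`. The gap condition makes the off-diagonal frequencies distinct and nonzero, so a
polynomial divisible by `X` and vanishing at all off-diagonal frequencies but one isolates each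
matrix unit `E_{kl}`, `k ≠ l`, in the complex span of `T^m H₁`, `m ≥ 1`, since `(H₁)_{kl} ≠ 0`.
These generators are Hermitian, so the Hermitian matrices in their complex span already lie in
their real span; hence that real span is the space of Hermitian matrices with zero diagonal,
which has real dimension `N(N - 1)`. Finally every `T^m H₁` lies in `ℒ(H₁, H₂)`.
-/

section ICommutator

variable {R : Type*} [Ring R] [Algebra ℂ R]

def iCommutator (a x : R) : R := Complex.I • (a * x - x * a)

theorem semiconj_iCommutator {S F : Type*} [Ring S] [Algebra ℂ S] [FunLike F R S]
    [AlgHomClass F ℂ R S] (f : F) (a : R) :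
    Function.Semiconj f (iCommutator a) (iCommutator (f a)) := fun x => by
  simp only [iCommutator, map_smul, map_sub, map_mul]

theorem IsSelfAdjoint.iCommutator [StarRing R] [StarModule ℂ R] {a x : R}
    (ha : IsSelfAdjoint a) (hx : IsSelfAdjoint x) : IsSelfAdjoint (iCommutator a x) := by
  rw [IsSelfAdjoint, _root_.iCommutator, star_smul, star_sub, star_mul, star_mul, ha.star_eq,
    hx.star_eq, Complex.star_def, Complex.conj_I, neg_smul, ← smul_neg, neg_sub]

theorem IsSelfAdjoint.iterate_iCommutator [StarRing R] [StarModule ℂ R] {a x : R}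
    (ha : IsSelfAdjoint a) (hx : IsSelfAdjoint x) (m : ℕ) :
    IsSelfAdjoint ((_root_.iCommutator a)^[m] x) := by
  induction m with
  | zero => exact hx
  | succ m ih =>
    exact Function.iterate_succ_apply' (_root_.iCommutator a) m x ▸ ha.iCommutator ih

end ICommutator

def posIterates {α : Type*} (f : α → α) (x : α) : Set α := {y | ∃ m : ℕ, 1 ≤ m ∧ y = f^[m] x}

theorem Function.Semiconj.image_posIterates {α β : Type*} {f : α → β} {ga : α → α}
    {gb : β → β} (h : Function.Semiconj f ga gb) (x : α) :
    f '' posIterates ga x = posIterates gb (f x) := by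
  ext y
  constructor
  · rintro ⟨_, ⟨m, hm, rfl⟩, rfl⟩
    exact ⟨m, hm, (h.iterate_right m).eq x⟩
  · rintro ⟨m, hm, rfl⟩
    exact ⟨_, ⟨m, hm, rfl⟩, (h.iterate_right m).eq x⟩

theorem span_posIterates_iCommutator_map {n : Type*} [Fintype n] [DecidableEq n]
    (e : Matrix n n ℂ ≃ₐ[ℂ] Matrix n n ℂ) (a x : Matrix n n ℂ) :
    Submodule.span ℝ (posIterates (iCommutator (e a)) (e x)) =
      (Submodule.span ℝ (posIterates (iCommutator a) x)).map
        (e.toLinearEquiv.restrictScalars ℝ : Matrix n n ℂ →ₗ[ℝ] Matrix n n ℂ) := by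
  rw [← Submodule.span_image]
  exact congrArg _ ((semiconj_iCommutator e a).image_posIterates x).symm

theorem Submodule.mem_span_real_of_isSelfAdjoint {A : Type*} [AddCommGroup A] [Module ℂ A]
    [Module ℝ A] [IsScalarTower ℝ ℂ A] [StarAddMonoid A] [StarModule ℂ A] {s : Set A}
    (hs : ∀ a ∈ s, IsSelfAdjoint a) {x : A} (hx : IsSelfAdjoint x)
    (hxs : x ∈ Submodule.span ℂ s) : x ∈ Submodule.span ℝ s := by
  obtain ⟨k, c, g, rfl⟩ := Submodule.mem_span_set'.mp hxs
  have hstar : star (∑ i, c i • (g i : A)) = ∑ i, star (c i) • (g i : A) := by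
    simp only [star_sum, star_smul, (hs _ (g _).2).star_eq]
  have hterm (i : Fin k) :
      c i • (g i : A) + star (c i) • (g i : A) = (2 : ℂ) • ((c i).re • (g i : A)) := by
    rw [← add_smul, Complex.star_def, Complex.add_conj, ← smul_one_smul ℂ (c i).re, smul_smul,
      Complex.real_smul, mul_one]
    push_cast
    rfl
  have hre : ∑ i, c i • (g i : A) = ∑ i, (c i).re • (g i : A) := by
    refine smul_right_injective A (two_ne_zero (α := ℂ)) ?_
    calc (2 : ℂ) • ∑ i, c i • (g i : A) = ∑ i, c i • (g i : A) + star (∑ i, c i • (g i : A)) := by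
          rw [hx.star_eq, two_smul]
      _ = (2 : ℂ) • ∑ i, (c i).re • (g i : A) := by
          rw [hstar, ← Finset.sum_add_distrib, Finset.smul_sum]
          exact Finset.sum_congr rfl fun i _ => hterm i
  rw [hre]
  exact Submodule.sum_mem _ fun i _ => Submodule.smul_mem _ _ (Submodule.subset_span (g i).2)

section LieDynAlg

variable {N : ℕ} (H₁ H₂ : Matrix (Fin N) (Fin N) ℂ)

theorem left_mem_lieDynAlg : H₁ ∈ LieDynAlg H₁ H₂ :=
  Submodule.mem_sInf.mpr fun _ hp => hp.1

theorem right_mem_lieDynAlg : H₂ ∈ LieDynAlg H₁ H₂ :=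
  Submodule.mem_sInf.mpr fun _ hp => hp.2.1

theorem iCommutator_mem_lieDynAlg {A B : Matrix (Fin N) (Fin N) ℂ} (hA : A ∈ LieDynAlg H₁ H₂)
    (hB : B ∈ LieDynAlg H₁ H₂) : iCommutator A B ∈ LieDynAlg H₁ H₂ :=
  Submodule.mem_sInf.mpr fun p hp =>
    hp.2.2 A (Submodule.mem_sInf.mp hA p hp) B (Submodule.mem_sInf.mp hB p hp)

theorem span_posIterates_le_lieDynAlg :
    Submodule.span ℝ (posIterates (iCommutator H₂) H₁) ≤ LieDynAlg H₁ H₂ := by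
  have hiter (m : ℕ) : (iCommutator H₂)^[m] H₁ ∈ LieDynAlg H₁ H₂ := by
    induction m with
    | zero => exact left_mem_lieDynAlg H₁ H₂
    | succ m ih =>
      rw [Function.iterate_succ_apply']
      exact iCommutator_mem_lieDynAlg H₁ H₂ (right_mem_lieDynAlg H₁ H₂) ih
  rw [Submodule.span_le]
  rintro _ ⟨m, -, rfl⟩
  exact hiter m

end LieDynAlg

section Diagonal

open Polynomial

variable {n : Type*} [Fintype n] [DecidableEq n]

def freq (d : n → ℝ) (i j : n) : ℂ := Complex.I * (d i - d j : ℝ)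

theorem iCommutator_diagonal_apply (d : n → ℝ) (G : Matrix n n ℂ) (i j : n) :
    iCommutator (diagonal fun k => (d k : ℂ)) G i j = freq d i j * G i j := by
  simp only [iCommutator, Matrix.smul_apply, Matrix.sub_apply, diagonal_mul, mul_diagonal,
    smul_eq_mul, freq]
  push_cast
  ring

theorem iterate_iCommutator_diagonal_apply (d : n → ℝ) (G : Matrix n n ℂ) (m : ℕ) (i j : n) :
    (iCommutator (diagonal fun k => (d k : ℂ)))^[m] G i j = freq d i j ^ m * G i j := by
  induction m with
  | zero => simp
  | succ m ih =>
    rw [Function.iterate_succ_apply', iCommutator_diagonal_apply, ih, pow_succ]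
    ring

theorem sum_coeff_smul_iterate_iCommutator_diagonal_apply (d : n → ℝ) (Q : ℂ[X])
    (G : Matrix n n ℂ) (i j : n) :
    (∑ m ∈ Finset.range (Q.natDegree + 1),
        Q.coeff m • (iCommutator (diagonal fun k => (d k : ℂ)))^[m + 1] G) i j =
      Q.eval (freq d i j) * freq d i j * G i j := by
  simp only [Matrix.sum_apply, Matrix.smul_apply, iterate_iCommutator_diagonal_apply, smul_eq_mul,
    eval_eq_sum_range, Finset.sum_mul, pow_succ, mul_assoc]

theorem single_mem_span_posIterates {d : n → ℝ}
    (hd : Set.InjOn (fun p : n × n => d p.1 - d p.2) {p | p.1 ≠ p.2})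
    {G : Matrix n n ℂ} (hG : ∀ k l, k ≠ l → G k l ≠ 0) {k l : n} (hkl : k ≠ l) :
    single k l 1 ∈
      Submodule.span ℂ (posIterates (iCommutator (diagonal fun i => (d i : ℂ))) G) := by
  have hfreq : Set.InjOn (fun p : n × n => freq d p.1 p.2) {p | p.1 ≠ p.2} := fun p hp q hq h =>
    hd hp hq (Complex.ofReal_injective (mul_left_cancel₀ Complex.I_ne_zero h))
  have hfreq_ne : freq d k l ≠ 0 := by
    refine mul_ne_zero Complex.I_ne_zero (Complex.ofReal_ne_zero.mpr fun h => hkl ?_)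
    exact congrArg Prod.fst
      (hd (x₁ := (k, l)) (x₂ := (l, k)) hkl hkl.symm (by simp only; linarith))
  -- `X * Q` vanishes at `0` and at every off-diagonal frequency except `freq d k l`.
  set Q : ℂ[X] := ∏ p ∈ (Finset.univ.offDiag.erase (k, l)), (X - C (freq d p.1 p.2))
  set c := Q.eval (freq d k l) * freq d k l * G k l
  have hc : c ≠ 0 := by
    refine mul_ne_zero (mul_ne_zero ?_ hfreq_ne) (hG k l hkl)
    rw [eval_prod, Finset.prod_ne_zero_iff]
    intro p hp
    obtain ⟨hpkl, hp⟩ := Finset.mem_erase.mp hp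
    rw [eval_sub, eval_X, eval_C, sub_ne_zero]
    exact fun h => hpkl (hfreq (Finset.mem_offDiag.mp hp).2.2 hkl h.symm)
  have hsum : ∑ m ∈ Finset.range (Q.natDegree + 1),
        Q.coeff m • (iCommutator (diagonal fun i => (d i : ℂ)))^[m + 1] G = c • single k l 1 := by
    ext i j
    rw [sum_coeff_smul_iterate_iCommutator_diagonal_apply, Matrix.smul_apply, single_apply]
    by_cases hij : k = i ∧ l = j
    · obtain ⟨rfl, rfl⟩ := hij
      simp [c]
    rw [if_neg hij, smul_zero]
    by_cases hii : i = j
    · simp [hii, freq]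
    have hmem : (i, j) ∈ Finset.univ.offDiag.erase (k, l) := by
      simp only [Finset.mem_erase, Finset.mem_offDiag, Finset.mem_univ, true_and, ne_eq,
        Prod.mk.injEq]
      tauto
    rw [eval_prod, Finset.prod_eq_zero hmem (by simp), zero_mul, zero_mul]
  have hmem : c • single k l 1 ∈
      Submodule.span ℂ (posIterates (iCommutator (diagonal fun i => (d i : ℂ))) G) := by
    rw [← hsum]
    exact Submodule.sum_mem _ fun m _ =>
      Submodule.smul_mem _ _ (Submodule.subset_span ⟨m + 1, by omega, rfl⟩)
  simpa [smul_smul, inv_mul_cancel₀ hc] using Submodule.smul_mem _ c⁻¹ hmem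

end Diagonal

section HermitianZeroDiag

variable (n : Type*)

def hermitianZeroDiag : Submodule ℝ (Matrix n n ℂ) where
  carrier := {H | H.IsHermitian ∧ ∀ k, H k k = 0}
  add_mem' ha hb := ⟨ha.1.add hb.1, fun k => by simp [ha.2 k, hb.2 k]⟩
  zero_mem' := ⟨isHermitian_zero, fun _ => rfl⟩
  smul_mem' r _ ha := ⟨IsSelfAdjoint.smul (IsSelfAdjoint.all r) ha.1, fun k => by simp [ha.2 k]⟩

variable {n}

theorem mem_hermitianZeroDiag {H : Matrix n n ℂ} :
    H ∈ hermitianZeroDiag n ↔ H.IsHermitian ∧ ∀ k, H k k = 0 := Iff.rfl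

variable [Fintype n] [DecidableEq n]

theorem mem_span_of_single_mem {s : Set (Matrix n n ℂ)}
    (hs : ∀ k l, k ≠ l → single k l 1 ∈ Submodule.span ℂ s) {H : Matrix n n ℂ}
    (hH : ∀ k, H k k = 0) : H ∈ Submodule.span ℂ s := by
  rw [matrix_eq_sum_single H]
  refine Submodule.sum_mem _ fun k _ => Submodule.sum_mem _ fun l _ => ?_
  by_cases hkl : k = l
  · simp [hkl, hH]
  · simpa using Submodule.smul_mem _ (H k l) (hs k l hkl)

theorem span_posIterates_iCommutator_diagonal {d : n → ℝ}
    (hd : Set.InjOn (fun p : n × n => d p.1 - d p.2) {p | p.1 ≠ p.2})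
    {G : Matrix n n ℂ} (hG : G.IsHermitian) (hGoff : ∀ k l, k ≠ l → G k l ≠ 0) :
    Submodule.span ℝ (posIterates (iCommutator (diagonal fun k => (d k : ℂ))) G) =
      hermitianZeroDiag n := by
  have hD : (diagonal fun k => (d k : ℂ)).IsHermitian :=
    isHermitian_diagonal_iff.mpr fun k => Complex.conj_ofReal (d k)
  have hgen : ∀ A ∈ posIterates (iCommutator (diagonal fun k => (d k : ℂ))) G,
      IsSelfAdjoint A := by
    rintro _ ⟨m, -, rfl⟩
    exact IsSelfAdjoint.iterate_iCommutator hD hG m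
  refine le_antisymm (Submodule.span_le.mpr ?_) fun H ⟨hH, hHdiag⟩ => ?_
  · rintro _ ⟨m, hm, rfl⟩
    refine ⟨hgen _ ⟨m, hm, rfl⟩, fun k => ?_⟩
    simp [iterate_iCommutator_diagonal_apply, freq, zero_pow (Nat.one_le_iff_ne_zero.mp hm)]
  · exact Submodule.mem_span_real_of_isSelfAdjoint hgen hH
      (mem_span_of_single_mem (fun k l hkl => single_mem_span_posIterates hd hGoff hkl) hHdiag)

end HermitianZeroDiag

section Finrank

variable {n : Type*} [DecidableEq n]

-- For Hermitian `H` the coordinates at `(i, j)` and `(j, i)` are `re ± im` of `H i j`.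
def hermitianZeroDiagCoord : hermitianZeroDiag n →ₗ[ℝ] ({p : n × n // p.1 ≠ p.2} → ℝ) where
  toFun H p := ((H : Matrix n n ℂ) p.1.1 p.1.2).re + ((H : Matrix n n ℂ) p.1.1 p.1.2).im
  map_add' H K := by
    ext p
    simp only [Submodule.coe_add, Matrix.add_apply, Complex.add_re, Complex.add_im, Pi.add_apply]
    ring
  map_smul' r H := by
    ext p
    simp only [Submodule.coe_smul, Matrix.smul_apply, Complex.smul_re, Complex.smul_im,
      RingHom.id_apply, Pi.smul_apply, smul_eq_mul]
    ring

theorem hermitianZeroDiagCoord_bijective :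
    Function.Bijective (hermitianZeroDiagCoord (n := n)) := by
  constructor
  · refine (injective_iff_map_eq_zero _).mpr fun ⟨H, hH, hdiag⟩ h => Subtype.ext (ext fun i j => ?_)
    by_cases hij : i = j
    · simp [hij, hdiag]
    have h₁ := congrFun h ⟨(i, j), hij⟩
    have h₂ := congrFun h ⟨(j, i), Ne.symm hij⟩
    simp only [hermitianZeroDiagCoord, LinearMap.coe_mk, AddHom.coe_mk, Pi.zero_apply] at h₁ h₂
    show H i j = 0
    rw [← hH.apply i j] at h₁ ⊢
    simp only [Complex.star_def, Complex.conj_re, Complex.conj_im] at h₁ ⊢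
    apply Complex.ext <;> simp <;> linarith
  · intro u
    let v (i j : n) : ℝ := if h : i = j then 0 else u ⟨(i, j), h⟩
    let X : Matrix n n ℂ := of fun i j => ⟨(v i j + v j i) / 2, (v i j - v j i) / 2⟩
    have hX : X ∈ hermitianZeroDiag n := by
      refine ⟨ext fun i j => Complex.ext ?_ ?_, fun k => Complex.ext ?_ ?_⟩ <;>
        simp [X, v] <;> ring
    refine ⟨⟨X, hX⟩, funext fun ⟨(i, j), hij⟩ => ?_⟩
    simp [hermitianZeroDiagCoord, X, v, hij, Ne.symm hij]
    ring

theorem finrank_hermitianZeroDiag [Fintype n] :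
    Module.finrank ℝ (hermitianZeroDiag n) = Fintype.card n * (Fintype.card n - 1) := by
  rw [(LinearEquiv.ofBijective _ hermitianZeroDiagCoord_bijective).finrank_eq,
    Module.finrank_fintype_fun_eq_card, Fintype.card_subtype, Nat.mul_sub_one]
  have : Finset.univ.filter (fun p : n × n => p.1 ≠ p.2) = Finset.univ.offDiag := by
    ext p
    simp
  rw [this, Finset.offDiag_card, Finset.card_univ]

end Finrank

section Eigenbasis

variable {n : Type*} [Fintype n] [DecidableEq n] {ψ : n → n → ℂ}

theorem transpose_of_mem_unitaryGroup
    (horth : ∀ k l, star (ψ k) ⬝ᵥ ψ l = if k = l then 1 else 0) :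
    (of ψ)ᵀ ∈ unitaryGroup n ℂ := by
  rw [mem_unitaryGroup_iff']
  ext k l
  simpa [Matrix.mul_apply, dotProduct, one_apply] using horth k l

-- Change of basis to `ψ`: maps `single k l 1` to `|ψ k⟩⟨ψ l|`.
def orthonormalConj (horth : ∀ k l, star (ψ k) ⬝ᵥ ψ l = if k = l then 1 else 0) :
    Matrix n n ℂ ≃ₐ[ℂ] Matrix n n ℂ :=
  (Unitary.conjStarAlgAut ℂ _ ⟨_, transpose_of_mem_unitaryGroup horth⟩).toAlgEquiv

variable (horth : ∀ k l, star (ψ k) ⬝ᵥ ψ l = if k = l then 1 else 0)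

theorem orthonormalConj_symm_apply (K : Matrix n n ℂ) (k l : n) :
    (orthonormalConj horth).symm K k l = star (ψ k) ⬝ᵥ (K *ᵥ ψ l) := by
  change ((of ψ)ᵀᴴ * K * (of ψ)ᵀ) k l = _
  simp only [Matrix.mul_apply, mulVec, dotProduct, Finset.mul_sum, Finset.sum_mul, mul_assoc,
    conjTranspose_apply, transpose_apply, of_apply, Pi.star_apply]
  exact Finset.sum_comm

theorem isHermitian_orthonormalConj_symm_iff {H : Matrix n n ℂ} :
    ((orthonormalConj horth).symm H).IsHermitian ↔ H.IsHermitian := by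
  refine ⟨fun h => ?_, isHermitian_conjTranspose_mul_mul _⟩
  rw [← (orthonormalConj horth).apply_symm_apply H]
  exact isHermitian_mul_mul_conjTranspose _ h

theorem orthonormalConj_diagonal {H : Matrix n n ℂ} {lam : n → ℝ}
    (heig : ∀ k, H *ᵥ ψ k = (lam k : ℂ) • ψ k) :
    orthonormalConj horth (diagonal fun k => (lam k : ℂ)) = H := by
  have hHP : H * (of ψ)ᵀ = (of ψ)ᵀ * diagonal (fun k => (lam k : ℂ)) := by
    ext i k
    rw [mul_diagonal]
    simpa [Matrix.mul_apply, mulVec, dotProduct, mul_comm] using congrFun (heig k) i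
  change (of ψ)ᵀ * _ * star (of ψ)ᵀ = H
  rw [← hHP, Matrix.mul_assoc, mem_unitaryGroup_iff.mp (transpose_of_mem_unitaryGroup horth),
    Matrix.mul_one]

theorem coe_map_hermitianZeroDiag_orthonormalConj :
    ((hermitianZeroDiag n).map ((orthonormalConj horth).toLinearEquiv.restrictScalars ℝ :
        Matrix n n ℂ →ₗ[ℝ] Matrix n n ℂ) : Set (Matrix n n ℂ)) =
      {H | H.IsHermitian ∧ ∀ k, star (ψ k) ⬝ᵥ (H *ᵥ ψ k) = 0} := by
  ext H
  rw [SetLike.mem_coe, Submodule.mem_map_equiv, mem_hermitianZeroDiag]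
  exact and_congr (isHermitian_orthonormalConj_symm_iff horth)
    (forall_congr' fun k => by rw [← orthonormalConj_symm_apply horth]; rfl)

end Eigenbasis

theorem stmt15_general {N : ℕ} (H₁ H₂ : Matrix (Fin N) (Fin N) ℂ)
    (h₁ : H₁.IsHermitian)
    (lam : Fin N → ℝ) (ψ : Fin N → (Fin N → ℂ))
    (horth : ∀ k l, dotProduct (star (ψ k)) (ψ l) = if k = l then 1 else 0)
    (heig : ∀ k, H₂ *ᵥ ψ k = (lam k : ℂ) • ψ k)
    (hoffdiag : ∀ k l, k ≠ l → dotProduct (star (ψ l)) (H₁ *ᵥ ψ k) ≠ 0)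
    (hgaps : ∀ k l k' l' : Fin N, k ≠ l → k' ≠ l' → (k, l) ≠ (k', l') →
      lam k - lam l ≠ lam k' - lam l') :
    ({H : Matrix (Fin N) (Fin N) ℂ | H.IsHermitian ∧
        ∀ k, dotProduct (star (ψ k)) (H *ᵥ ψ k) = 0}
      ⊆ (LieDynAlg H₁ H₂ : Set (Matrix (Fin N) (Fin N) ℂ))) ∧
    ((Submodule.span ℝ {A : Matrix (Fin N) (Fin N) ℂ | ∃ m : ℕ, 1 ≤ m ∧
        A = (fun H => Complex.I • (H₂ * H - H * H₂))^[m] H₁} :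
          Set (Matrix (Fin N) (Fin N) ℂ)) =
      {H : Matrix (Fin N) (Fin N) ℂ | H.IsHermitian ∧
        ∀ k, dotProduct (star (ψ k)) (H *ᵥ ψ k) = 0}) ∧
    Module.finrank ℝ ↥(Submodule.span ℝ {A : Matrix (Fin N) (Fin N) ℂ | ∃ m : ℕ, 1 ≤ m ∧
        A = (fun H => Complex.I • (H₂ * H - H * H₂))^[m] H₁}) = N * (N - 1) := by
  set e := orthonormalConj horth
  have hd : Set.InjOn (fun p : Fin N × Fin N => lam p.1 - lam p.2) {p | p.1 ≠ p.2} :=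
    fun p hp q hq h => by_contra fun hpq => hgaps p.1 p.2 q.1 q.2 hp hq hpq h
  have hspan : Submodule.span ℝ (posIterates (iCommutator H₂) H₁) =
      (hermitianZeroDiag (Fin N)).map
        (e.toLinearEquiv.restrictScalars ℝ : Matrix (Fin N) (Fin N) ℂ →ₗ[ℝ] _) := by
    rw [← orthonormalConj_diagonal horth heig, ← e.apply_symm_apply H₁,
      span_posIterates_iCommutator_map, span_posIterates_iCommutator_diagonal hd
        ((isHermitian_orthonormalConj_symm_iff horth).mpr h₁)
        fun k l hkl => orthonormalConj_symm_apply horth H₁ k l ▸ hoffdiag l k hkl.symm]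
  have h𝒯 : (Submodule.span ℝ (posIterates (iCommutator H₂) H₁) : Set _) =
      {H : Matrix (Fin N) (Fin N) ℂ | H.IsHermitian ∧
        ∀ k, dotProduct (star (ψ k)) (H *ᵥ ψ k) = 0} := by
    rw [hspan, coe_map_hermitianZeroDiag_orthonormalConj]
  refine ⟨?_, h𝒯, ?_⟩
  · rw [← h𝒯]
    exact span_posIterates_le_lieDynAlg H₁ H₂
  · change Module.finrank ℝ (Submodule.span ℝ (posIterates (iCommutator H₂) H₁)) = _
    rw [hspan, LinearEquiv.finrank_map_eq, finrank_hermitianZeroDiag, Fintype.card_fin]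

/-- **Lemma.** Under the hypotheses of the constructive controllability criterion, the subspace
`𝒯` of Hermitian operators whose diagonal matrix elements in the eigenbasis of `H₂` vanish is
contained in `ℒ(H₁,H₂)`; in fact the real linear span of `T(H₁), T²(H₁), …`, where
`T(H) = {H₂,H}`, coincides with `𝒯`, which has real dimension `N(N−1)`. -/
theorem stmt15 {N : ℕ} (hN : 1 < N) (H₁ H₂ : Matrix (Fin N) (Fin N) ℂ)
    (h₁ : H₁.IsHermitian) (h₂ : H₂.IsHermitian)
    (lam : Fin N → ℝ) (ψ : Fin N → (Fin N → ℂ))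
    (horth : ∀ k l, dotProduct (star (ψ k)) (ψ l) = if k = l then 1 else 0)
    (heig : ∀ k, H₂ *ᵥ ψ k = (lam k : ℂ) • ψ k)
    (hoffdiag : ∀ k l, k ≠ l → dotProduct (star (ψ l)) (H₁ *ᵥ ψ k) ≠ 0)
    (hgaps : ∀ k l k' l' : Fin N, k ≠ l → k' ≠ l' → (k, l) ≠ (k', l') →
      lam k - lam l ≠ lam k' - lam l') :
    ({H : Matrix (Fin N) (Fin N) ℂ | H.IsHermitian ∧
        ∀ k, dotProduct (star (ψ k)) (H *ᵥ ψ k) = 0}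
      ⊆ (LieDynAlg H₁ H₂ : Set (Matrix (Fin N) (Fin N) ℂ))) ∧
    ((Submodule.span ℝ {A : Matrix (Fin N) (Fin N) ℂ | ∃ m : ℕ, 1 ≤ m ∧
        A = (fun H => Complex.I • (H₂ * H - H * H₂))^[m] H₁} :
          Set (Matrix (Fin N) (Fin N) ℂ)) =
      {H : Matrix (Fin N) (Fin N) ℂ | H.IsHermitian ∧
        ∀ k, dotProduct (star (ψ k)) (H *ᵥ ψ k) = 0}) ∧
    Module.finrank ℝ ↥(Submodule.span ℝ {A : Matrix (Fin N) (Fin N) ℂ | ∃ m : ℕ, 1 ≤ m ∧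
        A = (fun H => Complex.I • (H₂ * H - H * H₂))^[m] H₁}) = N * (N - 1) :=
  stmt15_general H₁ H₂ h₁ lam ψ horth heig hoffdiag hgaps
end

section
/- Let H₁, H₂ be Hermitian operators on ℂ^N satisfying the hypotheses of the previous statement ((H₁ψ_k,ψ_j) ≠ 0 for all k ≠ j, and all differences λ_k − λ_l of eigenvalues of H₂ for k ≠ l are pairwise distinct). Then for all k ≠ j the Hermitian operator E_{k,j}, defined in the eigenbasis ψ₁,…,ψ_N of H₂ by (E_{k,j}ψ_{k'},ψ_{j'}) = 1 if k' = j' = k, −1 if k' = j' = j, and 0 otherwise, belongs to ℒ(H₁,H₂). -/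
open Matrix MeasureTheory Filter Topology
open scoped ENNReal

/-! In the eigenbasis of `H₂` the operator `H₂` becomes the diagonal matrix `D = diag(λ)` and
`H₁` a Hermitian matrix `C` with nonzero off-diagonal entries. Bracketing twice with `D`
multiplies the `(a, b)` entry by `-(λ_a - λ_b)²`, so a suitable polynomial in this operator,
applied to `C`, keeps only the `(k, j)` and `(j, k)` entries, because no other gap equals
`±(λ_k - λ_j)`. Calling the result `X`, the bracket `{X, {D, X}}` is a nonzero real multiple of
`E_{k,j}`. -/

namespace Matrix

variable {n : Type*} [Fintype n] [DecidableEq n]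

def iBracket (A B : Matrix n n ℂ) : Matrix n n ℂ := Complex.I • (A * B - B * A)

def BracketClosed (p : Submodule ℝ (Matrix n n ℂ)) : Prop :=
  ∀ A ∈ p, ∀ B ∈ p, iBracket A B ∈ p

theorem iBracket_add_right (A B B' : Matrix n n ℂ) :
    iBracket A (B + B') = iBracket A B + iBracket A B' := by
  simp only [iBracket, mul_add, add_mul, ← smul_add]
  abel_nf

theorem iBracket_diagonal_apply (d : n → ℝ) (A : Matrix n n ℂ) (a b : n) :
    iBracket (diagonal fun i => (d i : ℂ)) A a b = Complex.I * (d a - d b) * A a b := by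
  simp only [iBracket, smul_apply, sub_apply, diagonal_mul, mul_diagonal, smul_eq_mul]
  ring

theorem iBracket_diagonal_iBracket_diagonal_apply (d : n → ℝ) (A : Matrix n n ℂ) (a b : n) :
    iBracket (diagonal fun i => (d i : ℂ)) (iBracket (diagonal fun i => (d i : ℂ)) A) a b
      = -((d a - d b) ^ 2 : ℝ) * A a b := by
  simp only [iBracket_diagonal_apply]
  push_cast
  linear_combination (((d a : ℂ) - d b) ^ 2 * A a b) * Complex.I_sq

theorem iBracket_diagonal_single (d : n → ℝ) (a b : n) (z : ℂ) :
    iBracket (diagonal fun i => (d i : ℂ)) (single a b z)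
      = single a b (Complex.I * (d a - d b) * z) := by
  ext i l
  rw [iBracket_diagonal_apply, single_apply, single_apply]
  split_ifs with h
  · rw [h.1, h.2]
  · rw [mul_zero]

theorem iBracket_single_add_single {k j : n} (hkj : k ≠ j) (d : n → ℝ) (z : ℂ) :
    iBracket (single k j z + single j k (star z))
        (iBracket (diagonal fun i => (d i : ℂ)) (single k j z + single j k (star z)))
      = (2 * (d k - d j) * Complex.normSq z : ℝ) • (single k k 1 - single j j 1) := by
  rw [iBracket_add_right, iBracket_diagonal_single, iBracket_diagonal_single, iBracket]
  simp only [add_mul, mul_add, single_mul_single_same, single_mul_single_of_ne _ _ _ _ hkj,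
    single_mul_single_of_ne _ _ _ _ hkj.symm, zero_add, add_zero]
  ext a b
  simp only [smul_apply, sub_apply, add_apply, single_apply, smul_eq_mul,
    Complex.real_smul]
  rw [Complex.ofReal_mul, ← Complex.mul_conj, ← Complex.star_def]
  split_ifs <;> push_cast <;> ring_nf <;> simp only [Complex.I_sq] <;> ring

omit [Fintype n] in
theorem sq_sub_ne_sq_sub_of_gaps_ne {d : n → ℝ}
    (hgaps : ∀ k l k' l' : n, k ≠ l → k' ≠ l' → (k, l) ≠ (k', l') →
      d k - d l ≠ d k' - d l')
    {k j : n} (hkj : k ≠ j) (a b : n) (hkj' : (a, b) ≠ (k, j)) (hjk' : (a, b) ≠ (j, k)) :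
    (d a - d b) ^ 2 ≠ (d k - d j) ^ 2 := by
  have hkj_jk : d k - d j ≠ d j - d k :=
    hgaps k j j k hkj hkj.symm (by simp [hkj])
  by_cases hab : a = b
  · subst hab
    intro h
    apply hkj_jk
    nlinarith [sq_nonneg (d k - d j)]
  · rw [Ne, sq_eq_sq_iff_eq_or_eq_neg, not_or, neg_sub]
    exact ⟨hgaps a b k j hab hkj hkj', hgaps a b j k hab hkj.symm hjk'⟩

namespace BracketClosed

variable {p : Submodule ℝ (Matrix n n ℂ)} (hp : BracketClosed p)
include hp

theorem comap_algHom (f : Matrix n n ℂ →ₐ[ℂ] Matrix n n ℂ) :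
    BracketClosed (p.comap (f.toLinearMap.restrictScalars ℝ)) := by
  intro A hA B hB
  simp only [Submodule.mem_comap, LinearMap.coe_restrictScalars, AlgHom.toLinearMap_apply,
    iBracket, map_smul, map_sub, map_mul] at hA hB ⊢
  exact hp _ hA _ hB

variable {d : n → ℝ} (hD : diagonal (fun i => (d i : ℂ)) ∈ p)
include hD

theorem exists_mem_apply_eq_prod_mul {A : Matrix n n ℂ} (hA : A ∈ p) (S : Finset ℝ) :
    ∃ B ∈ p, ∀ a b, B a b = (∏ r ∈ S, (r - (d a - d b) ^ 2) : ℝ) * A a b := by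
  classical
  induction S using Finset.induction_on with
  | empty => exact ⟨A, hA, by simp⟩
  | insert r S hr ih =>
    obtain ⟨B, hB, hBe⟩ := ih
    refine ⟨iBracket _ (iBracket _ B) + r • B,
      p.add_mem (hp _ hD _ (hp _ hD _ hB)) (p.smul_mem r hB), fun a b => ?_⟩
    rw [add_apply, iBracket_diagonal_iBracket_diagonal_apply, smul_apply, hBe,
      Finset.prod_insert hr, Complex.real_smul]
    push_cast
    ring

theorem single_add_single_mem {C : Matrix n n ℂ} (hC : C ∈ p) {k j : n} (hkj : k ≠ j)
    (hsep : ∀ a b, (a, b) ≠ (k, j) → (a, b) ≠ (j, k) →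
      (d a - d b) ^ 2 ≠ (d k - d j) ^ 2) :
    single k j (C k j) + single j k (C j k) ∈ p := by
  classical
  -- the squared gaps of all other entries, diagonal ones included
  let S := ((Finset.univ : Finset (n × n)).filter fun q => q ≠ (k, j) ∧ q ≠ (j, k)).image
    fun q => (d q.1 - d q.2) ^ 2
  obtain ⟨B, hB, hBe⟩ := hp.exists_mem_apply_eq_prod_mul hD hC S
  set c := ∏ r ∈ S, (r - (d k - d j) ^ 2)
  have hc : c ≠ 0 := by
    refine Finset.prod_ne_zero_iff.2 fun r hr => sub_ne_zero.2 ?_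
    obtain ⟨⟨a, b⟩, hab, rfl⟩ := Finset.mem_image.1 hr
    obtain ⟨hkj', hjk'⟩ := (Finset.mem_filter.1 hab).2
    exact hsep a b hkj' hjk'
  suffices hBc : B = c • (single k j (C k j) + single j k (C j k)) by
    rwa [hBc, Submodule.smul_mem_iff _ hc] at hB
  ext a b
  rw [hBe, smul_apply, add_apply, single_apply, single_apply, Complex.real_smul]
  by_cases hkj' : (a, b) = (k, j)
  · rw [Prod.mk.injEq] at hkj'
    rw [hkj'.1, hkj'.2, if_pos ⟨rfl, rfl⟩, if_neg fun h => hkj h.1.symm, add_zero]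
  by_cases hjk' : (a, b) = (j, k)
  · rw [Prod.mk.injEq] at hjk'
    have hsym : (d j - d k) ^ 2 = (d k - d j) ^ 2 := by ring
    rw [hjk'.1, hjk'.2, if_neg fun h => hkj h.1, if_pos ⟨rfl, rfl⟩, zero_add, hsym]
  have hmem : (d a - d b) ^ 2 ∈ S :=
    Finset.mem_image.2 ⟨(a, b), Finset.mem_filter.2 ⟨Finset.mem_univ _, hkj', hjk'⟩, rfl⟩
  rw [Finset.prod_eq_zero (f := fun r => r - (d a - d b) ^ 2) hmem (sub_self _),
    if_neg fun h => hkj' (by rw [h.1, h.2]), if_neg fun h => hjk' (by rw [h.1, h.2])]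
  simp

theorem single_sub_single_mem {C : Matrix n n ℂ} (hC : C ∈ p) (hCh : C.IsHermitian) {k j : n}
    (hkj : k ≠ j) (hCkj : C k j ≠ 0)
    (hsep : ∀ a b, (a, b) ≠ (k, j) → (a, b) ≠ (j, k) →
      (d a - d b) ^ 2 ≠ (d k - d j) ^ 2) :
    single k k 1 - single j j 1 ∈ p := by
  have hX := hp.single_add_single_mem hD hC hkj hsep
  rw [← hCh.apply j k] at hX
  have hbr := hp _ hX _ (hp _ hD _ hX)
  rw [iBracket_single_add_single hkj] at hbr
  have hdkj : d k - d j ≠ 0 := fun h =>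
    hsep j j (by simp [hkj.symm]) (by simp [hkj.symm]) (by rw [h, sub_self])
  refine (Submodule.smul_mem_iff _ ?_).1 hbr
  exact mul_ne_zero (mul_ne_zero two_ne_zero hdkj) (Complex.normSq_pos.2 hCkj).ne'

end BracketClosed

def ofCols {m : Type*} {α : Type*} (ψ : n → m → α) : Matrix m n α := of fun i a => ψ a i

omit [DecidableEq n] in
theorem conjTranspose_ofCols_mul_mul_ofCols_apply (ψ : n → n → ℂ) (A : Matrix n n ℂ)
    (a b : n) :
    ((ofCols ψ)ᴴ * A * ofCols ψ) a b = star (ψ a) ⬝ᵥ (A *ᵥ ψ b) := by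
  rw [mul_mul_apply]
  rfl

theorem ofCols_mul_single_mul_conjTranspose (ψ : n → n → ℂ) (a b : n) :
    ofCols ψ * single a b 1 * (ofCols ψ)ᴴ = vecMulVec (ψ a) (star (ψ b)) := by
  rw [single_eq_single_vecMulVec_single, mul_vecMulVec, vecMulVec_mul, mulVec_single_one,
    single_one_vecMul]
  rfl

theorem ofCols_mem_unitaryGroup {ψ : n → n → ℂ}
    (horth : ∀ k l, star (ψ k) ⬝ᵥ ψ l = if k = l then 1 else 0) :
    ofCols ψ ∈ unitaryGroup n ℂ := by
  refine mem_unitaryGroup_iff'.2 (ext fun a b => ?_)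
  rw [star_eq_conjTranspose, ← Matrix.mul_one (ofCols ψ)ᴴ,
    conjTranspose_ofCols_mul_mul_ofCols_apply, one_mulVec, horth, one_apply]

theorem conjTranspose_ofCols_mul_mul_ofCols_eq_diagonal {ψ : n → n → ℂ}
    (horth : ∀ k l, star (ψ k) ⬝ᵥ ψ l = if k = l then 1 else 0)
    {H : Matrix n n ℂ} {lam : n → ℝ} (heig : ∀ k, H *ᵥ ψ k = (lam k : ℂ) • ψ k) :
    (ofCols ψ)ᴴ * H * ofCols ψ = diagonal fun i => (lam i : ℂ) := by
  ext a b
  rw [conjTranspose_ofCols_mul_mul_ofCols_apply, heig, dotProduct_smul, horth, diagonal_apply]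
  split_ifs with hab
  · rw [hab, smul_eq_mul, mul_one]
  · rw [smul_zero]

end Matrix

theorem stmt16_general {N : ℕ} (H₁ H₂ : Matrix (Fin N) (Fin N) ℂ)
    (h₁ : H₁.IsHermitian)
    (lam : Fin N → ℝ) (ψ : Fin N → (Fin N → ℂ))
    (horth : ∀ k l, dotProduct (star (ψ k)) (ψ l) = if k = l then 1 else 0)
    (heig : ∀ k, H₂ *ᵥ ψ k = (lam k : ℂ) • ψ k)
    (hoffdiag : ∀ k l, k ≠ l → dotProduct (star (ψ l)) (H₁ *ᵥ ψ k) ≠ 0)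
    (hgaps : ∀ k l k' l' : Fin N, k ≠ l → k' ≠ l' → (k, l) ≠ (k', l') →
      lam k - lam l ≠ lam k' - lam l') :
    ∀ k j : Fin N, k ≠ j →
      Matrix.vecMulVec (ψ k) (star (ψ k)) - Matrix.vecMulVec (ψ j) (star (ψ j))
        ∈ LieDynAlg H₁ H₂ := by
  intro k j hkj
  rw [LieDynAlg, Submodule.mem_sInf]
  rintro p ⟨hH₁, hH₂, hp⟩
  let e := Unitary.conjStarAlgAut ℂ (Matrix (Fin N) (Fin N) ℂ)
    ⟨ofCols ψ, ofCols_mem_unitaryGroup horth⟩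
  let f : Matrix (Fin N) (Fin N) ℂ →ₐ[ℂ] Matrix (Fin N) (Fin N) ℂ := e.toAlgEquiv
  let q := p.comap (f.toLinearMap.restrictScalars ℝ)
  have hmem {A : Matrix (Fin N) (Fin N) ℂ} : A ∈ q ↔ e A ∈ p := Iff.rfl
  have hsymm_mem {H : Matrix (Fin N) (Fin N) ℂ} (hH : H ∈ p) : e.symm H ∈ q := by
    rwa [hmem, StarAlgEquiv.apply_symm_apply]
  have hD : diagonal (fun i => (lam i : ℂ)) ∈ q :=
    conjTranspose_ofCols_mul_mul_ofCols_eq_diagonal horth heig ▸ hsymm_mem hH₂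
  have hE := (BracketClosed.comap_algHom hp f).single_sub_single_mem hD (hsymm_mem hH₁)
    (isHermitian_conjTranspose_mul_mul (ofCols ψ) h₁) hkj
    ((conjTranspose_ofCols_mul_mul_ofCols_apply ψ H₁ k j).trans_ne (hoffdiag j k hkj.symm))
    (sq_sub_ne_sq_sub_of_gaps_ne hgaps hkj)
  rwa [hmem, map_sub, Unitary.conjStarAlgAut_apply, Unitary.conjStarAlgAut_apply,
    star_eq_conjTranspose, ofCols_mul_single_mul_conjTranspose,
    ofCols_mul_single_mul_conjTranspose] at hE

/-- **Lemma.** Under the hypotheses of the constructive controllability criterion, for all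
`k ≠ j` the Hermitian operator `E_{k,j}` — which, in the eigenbasis `ψ₁,…,ψ_N` of `H₂`, is
diagonal with entry `+1` at position `k`, `−1` at position `j` and `0` elsewhere, i.e.
`E_{k,j} = ψ_k ψ_k^* − ψ_j ψ_j^*` — belongs to `ℒ(H₁,H₂)`. -/
theorem stmt16 {N : ℕ} (hN : 1 < N) (H₁ H₂ : Matrix (Fin N) (Fin N) ℂ)
    (h₁ : H₁.IsHermitian) (h₂ : H₂.IsHermitian)
    (lam : Fin N → ℝ) (ψ : Fin N → (Fin N → ℂ))
    (horth : ∀ k l, dotProduct (star (ψ k)) (ψ l) = if k = l then 1 else 0)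
    (heig : ∀ k, H₂ *ᵥ ψ k = (lam k : ℂ) • ψ k)
    (hoffdiag : ∀ k l, k ≠ l → dotProduct (star (ψ l)) (H₁ *ᵥ ψ k) ≠ 0)
    (hgaps : ∀ k l k' l' : Fin N, k ≠ l → k' ≠ l' → (k, l) ≠ (k', l') →
      lam k - lam l ≠ lam k' - lam l') :
    ∀ k j : Fin N, k ≠ j →
      Matrix.vecMulVec (ψ k) (star (ψ k)) - Matrix.vecMulVec (ψ j) (star (ψ j))
        ∈ LieDynAlg H₁ H₂ :=
  stmt16_general H₁ H₂ h₁ lam ψ horth heig hoffdiag hgaps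
end
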